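/- arXiv:math/0403021 — 4 statements merged into one kernel-verified Lean document; each statement's English description precedes it below -/
import Mathlib

section
/- Let k be a field and let A be a quantum graded algebra with a straightening law on a finite poset (Π, ≤st). Then the set of standard monomials on Π (products α₁⋯α_s with αᵢ ∈ Π and α₁ ≤st ⋯ ≤st α_s, together with 1) forms a k-vector space basis of A. -/
/-!
Rewriting a monomial `xs ++ a :: b :: ys` with `¬ a ≤ b` by the straightening relation (if
`a`, `b` are incomparable) or by the commutation relation (if `b < a`) only produces monomials
that are smaller in the shortlex order on words over the well-founded poset `Π`: either
shorter, or of the same length with a smaller letter in the first modified position. Hence by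
well-founded induction every monomial, and so (by generation) all of `A`, lies in the span of
the standard monomials, which are linearly independent by hypothesis.
-/

/-- A *quantum graded algebra with a straightening law* over the field `k`, on the finite
poset `ι` (whose elements are realised in `A` via the map `elem`). -/
structure QuantumGradedASL (k : Type*) [Field k] (A : Type*) [Ring A] [Algebra k A]
    (𝒜 : ℕ → Submodule k A) (ι : Type*) [PartialOrder ι] [Finite ι] where
  /-- the map realising the elements of the poset `Π = ι` as elements of `A` -/
  elem : ι → A
  /-- `A` is an `ℕ`-graded `k`-algebra with grading `𝒜` -/
  graded : GradedAlgebra 𝒜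
  /-- (1) the elements of `Π` are homogeneous of positive degree -/
  homog : ∀ i : ι, ∃ d : ℕ, 0 < d ∧ elem i ∈ 𝒜 d
  /-- (2) the elements of `Π` generate `A` as a `k`-algebra -/
  gen : Algebra.adjoin k (Set.range elem) = ⊤
  /-- (3) the standard monomials (products of the `elem i` along nondecreasing lists,
  the empty product being `1`) form a linearly independent family -/
  indep : LinearIndependent k
    (fun l : {l : List ι // l.Chain' (· ≤ ·)} => ((l : List ι).map elem).prod)
  /-- (4) if `a`, `b` are incomparable then `elem a * elem b` is a linear combination of
  terms `elem lam` or `elem lam * elem mu` with `lam ≤ mu`, `lam < a` and `lam < b` -/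
  straighten : ∀ a b : ι, ¬ a ≤ b → ¬ b ≤ a →
    elem a * elem b ∈ Submodule.span k {x : A | ∃ lam : ι, lam < a ∧ lam < b ∧
      (x = elem lam ∨ ∃ mu : ι, lam ≤ mu ∧ x = elem lam * elem mu)}
  /-- (5) for all `a`, `b` there is `0 ≠ c ∈ k` such that `elem a * elem b - c • (elem b * elem a)`
  is a linear combination of terms `elem lam` or `elem lam * elem mu` with `lam ≤ mu`,
  `lam < a` and `lam < b` -/
  comm : ∀ a b : ι, ∃ c : k, c ≠ 0 ∧
    elem a * elem b - c • (elem b * elem a) ∈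
      Submodule.span k {x : A | ∃ lam : ι, lam < a ∧ lam < b ∧
        (x = elem lam ∨ ∃ mu : ι, lam ≤ mu ∧ x = elem lam * elem mu)}

open Submodule

theorem List.exists_eq_append_cons_cons_of_not_isChain {α : Type*} {R : α → α → Prop}
    {l : List α} (hl : ¬ l.IsChain R) : ∃ a b xs ys, l = xs ++ a :: b :: ys ∧ ¬ R a b := by
  simpa using mt List.isChain_iff_forall_rel_of_append_cons_cons.mpr hl

section Straightening

variable {k : Type*} [CommSemiring k] {A : Type*} [Ring A] [Algebra k A]

theorem span_range_list_prod_map_eq_top_of_adjoin_eq_top {ι : Type*} {e : ι → A}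
    (he : Algebra.adjoin k (Set.range e) = ⊤) :
    span k (Set.range fun l : List ι => (l.map e).prod) = ⊤ := by
  rw [eq_top_iff, ← Algebra.top_toSubmodule, ← he, Algebra.adjoin_eq_span,
    ← FreeMonoid.mrange_lift, span_le]
  rintro _ ⟨w, rfl⟩
  exact subset_span ⟨w.toList, (FreeMonoid.lift_apply e w).symm⟩

theorem Submodule.mul_mul_mem_of_mem_span {S : Submodule k A} {T : Set A} {P R x : A}
    (hx : x ∈ span k T) (hT : ∀ y ∈ T, P * y * R ∈ S) : P * x * R ∈ S := by
  induction hx using Submodule.span_induction with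
  | mem y hy => exact hT y hy
  | zero => simp
  | add y z _ _ hy hz => simpa [mul_add, add_mul] using S.add_mem hy hz
  | smul c y _ hy => simpa [mul_smul_comm, smul_mul_assoc] using S.smul_mem c hy

variable {ι : Type*} [Preorder ι]

/-- The right-hand sides allowed in the straightening and commutation relations for
`e a * e b`. -/
def lowerTerms (e : ι → A) (a b : ι) : Set A :=
  {x | ∃ lam : ι, lam < a ∧ lam < b ∧ (x = e lam ∨ ∃ mu : ι, lam ≤ mu ∧ x = e lam * e mu)}

variable (k) in
def standardSpan (e : ι → A) : Submodule k A :=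
  span k (Set.range fun l : {l : List ι // l.IsChain (· ≤ ·)} => ((l : List ι).map e).prod)

theorem list_prod_map_mem_standardSpan [WellFoundedLT ι] {e : ι → A}
    (straighten : ∀ a b, ¬ a ≤ b → ¬ b ≤ a → e a * e b ∈ span k (lowerTerms e a b))
    (comm : ∀ a b, b < a → ∃ c : k, e a * e b - c • (e b * e a) ∈ span k (lowerTerms e a b))
    (l : List ι) : (l.map e).prod ∈ standardSpan k e := by
  have hwf : WellFounded (List.Shortlex (α := ι) (· < ·)) := List.Shortlex.wf wellFounded_lt
  induction l using hwf.induction with | h l ih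
  by_cases hl : l.IsChain (· ≤ ·)
  · exact subset_span ⟨⟨l, hl⟩, rfl⟩
  obtain ⟨a, b, xs, ys, rfl, hab⟩ := List.exists_eq_append_cons_cons_of_not_isChain hl
  set P := (xs.map e).prod
  set R := (ys.map e).prod
  have hprod : ∀ m : List ι, ((xs ++ m ++ ys).map e).prod = P * (m.map e).prod * R := by
    simp [P, R, List.prod_append, mul_assoc]
  have hsmaller : ∀ m : List ι, List.Shortlex (· < ·) (m ++ ys) (a :: b :: ys) →
      P * (m.map e).prod * R ∈ standardSpan k e := by
    intro m hm
    rw [← hprod]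
    exact ih _ (by simpa using hm.append_left xs)
  have hlower : ∀ y ∈ lowerTerms e a b, P * y * R ∈ standardSpan k e := by
    rintro _ ⟨lam, hla, -, rfl | ⟨mu, -, rfl⟩⟩
    · simpa using hsmaller [lam] (.of_length_lt (by simp))
    · simpa using hsmaller [lam, mu] (.of_lex (by simp) (.rel hla))
  have hsplit : ((xs ++ a :: b :: ys).map e).prod = P * (e a * e b) * R := by
    simpa using hprod [a, b]
  rw [hsplit]
  by_cases hba : b ≤ a
  · have hlt : b < a := lt_of_le_not_ge hba hab
    obtain ⟨c, hc⟩ := comm a b hlt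
    have hswap : P * (e b * e a) * R ∈ standardSpan k e := by
      simpa using hsmaller [b, a] (.of_lex (by simp) (.rel hlt))
    have := add_mem (smul_mem _ c hswap) (mul_mul_mem_of_mem_span hc hlower)
    rwa [mul_sub, sub_mul, mul_smul_comm, smul_mul_assoc, add_sub_cancel] at this
  · exact mul_mul_mem_of_mem_span (straighten a b hab hba) hlower

end Straightening

/-- If `A` is a quantum graded algebra with a straightening law on the finite
poset `(Π, ≤st)`, then the standard monomials on `Π` form a `k`-vector space basis of `A`. -/
theorem standard_monomials_basis {k : Type*} [Field k] {A : Type*} [Ring A] [Algebra k A]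
    {𝒜 : ℕ → Submodule k A} {ι : Type*} [PartialOrder ι] [Finite ι]
    (Q : QuantumGradedASL k A 𝒜 ι) :
    ∃ B : Module.Basis {l : List ι // l.Chain' (· ≤ ·)} k A,
      ∀ l : {l : List ι // l.Chain' (· ≤ ·)}, B l = ((l : List ι).map Q.elem).prod := by
  have hspan : ⊤ ≤ standardSpan k Q.elem := by
    rw [← span_range_list_prod_map_eq_top_of_adjoin_eq_top Q.gen, span_le]
    rintro _ ⟨l, rfl⟩
    exact list_prod_map_mem_standardSpan Q.straighten
      (fun a b _ => (Q.comm a b).imp fun _ => And.right) l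
  exact ⟨.mk Q.indep hspan, Module.Basis.mk_apply Q.indep hspan⟩
end

section
/- Let k be a field and let A be a quantum graded algebra with a straightening law on a finite poset (Π, ≤st). For α ∈ Π let I_α be the two-sided ideal of A generated by {γ ∈ Π : γ <st α}. Then every α ∈ Π is normal modulo I_α (i.e. its image in A/I_α is a normal element); in particular every minimal element of Π is a normal element of A. Moreover, if Π has a unique minimal element α, then α is a regular (non-zero-divisor) normal element of A. -/
/-- `x` is a normal element of `A` modulo the subset `I` (intended: a two-sided ideal):
the image of `x` in `A/I` satisfies `x·(A/I) = (A/I)·x`. -/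
def IsNormalModSet {A : Type*} [Ring A] (x : A) (I : Set A) : Prop :=
  (∀ a : A, ∃ b : A, x * a - b * x ∈ I) ∧ (∀ a : A, ∃ b : A, a * x - x * b ∈ I)

/-!
Modulo `I_α`, the quantum commutation relation (5) for `α` and any generator `β` loses its
error term, since every term `λ` or `λμ` there has `λ < α`. So `α β ≡ c β α` with `c ≠ 0` on
generators, and the elements `y` admitting `b` with `α y ≡ b α` (resp. `y α ≡ α b`) form a
subalgebra, hence all of `A`.

For a unique minimal `α`, which is then the least element, `I_α = 0`, and `α · m` is again a
standard monomial for every standard monomial `m`, while `m · α` is a nonzero multiple of `α · m`.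
Straightening, by induction on a lexicographic weight of words, shows that the standard monomials
form a basis, so both multiplications by `α` send a basis to a linearly independent family and
are injective.
-/

open Submodule

section Normal

variable {R A : Type*} [CommRing R] [Ring A] [Algebra R A] {s : Set A}

theorem exists_mul_sub_mul_mem_of_adjoin_eq_top (hs : Algebra.adjoin R s = ⊤)
    (I : TwoSidedIdeal A) {x : A} (h : ∀ y ∈ s, ∃ b, x * y - b * x ∈ I) (y : A) :
    ∃ b, x * y - b * x ∈ I := by
  have hy : y ∈ Algebra.adjoin R s := hs ▸ Algebra.mem_top
  induction hy using Algebra.adjoin_induction with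
  | mem y hy => exact h y hy
  | algebraMap r => exact ⟨algebraMap R A r, by simp [Algebra.commutes, I.zero_mem]⟩
  | add y z _ _ hy hz =>
    obtain ⟨b, hb⟩ := hy
    obtain ⟨c, hc⟩ := hz
    refine ⟨b + c, ?_⟩
    convert I.add_mem hb hc using 1
    noncomm_ring
  | mul y z _ _ hy hz =>
    obtain ⟨b, hb⟩ := hy
    obtain ⟨c, hc⟩ := hz
    refine ⟨b * c, ?_⟩
    convert I.add_mem (I.mul_mem_right _ z hb) (I.mul_mem_left b _ hc) using 1
    noncomm_ring

theorem exists_mul_sub_mul_mem_of_adjoin_eq_top' (hs : Algebra.adjoin R s = ⊤)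
    (I : TwoSidedIdeal A) {x : A} (h : ∀ y ∈ s, ∃ b, y * x - x * b ∈ I) (y : A) :
    ∃ b, y * x - x * b ∈ I := by
  have hy : y ∈ Algebra.adjoin R s := hs ▸ Algebra.mem_top
  induction hy using Algebra.adjoin_induction with
  | mem y hy => exact h y hy
  | algebraMap r => exact ⟨algebraMap R A r, by simp [Algebra.commutes, I.zero_mem]⟩
  | add y z _ _ hy hz =>
    obtain ⟨b, hb⟩ := hy
    obtain ⟨c, hc⟩ := hz
    refine ⟨b + c, ?_⟩
    convert I.add_mem hb hc using 1
    noncomm_ring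
  | mul y z _ _ hy hz =>
    obtain ⟨b, hb⟩ := hy
    obtain ⟨c, hc⟩ := hz
    refine ⟨b * c, ?_⟩
    convert I.add_mem (I.mul_mem_left y _ hc) (I.mul_mem_right _ c hb) using 1
    noncomm_ring

theorem isNormalModSet_of_adjoin_eq_top (hs : Algebra.adjoin R s = ⊤) (I : TwoSidedIdeal A)
    {x : A} (h : ∀ y ∈ s, ∃ c : Rˣ, x * y - c • (y * x) ∈ I) : IsNormalModSet x I := by
  refine ⟨exists_mul_sub_mul_mem_of_adjoin_eq_top hs I fun y hy => ?_,
    exists_mul_sub_mul_mem_of_adjoin_eq_top' hs I fun y hy => ?_⟩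
  · obtain ⟨c, hc⟩ := h y hy
    exact ⟨c • y, by rwa [smul_mul_assoc]⟩
  · obtain ⟨c, hc⟩ := h y hy
    refine ⟨c⁻¹ • y, ?_⟩
    have key : y * x - x * (c⁻¹ • y) = -(c⁻¹ • (x * y - c • (y * x))) := by
      rw [mul_smul_comm, smul_sub, smul_smul, inv_mul_cancel, one_smul, neg_sub]
    rw [key, Units.smul_def, Algebra.smul_def]
    exact I.neg_mem (I.mul_mem_left _ _ hc)

end Normal

section Weight

variable {ι : Type*}

/-- The word read as a base-`B` numeral with digits `f i + 1`, most significant first: once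
`f i + 2 ≤ B`, longer words weigh more and words of equal length compare lexicographically
along `f`. -/
def List.lexWeight (f : ι → ℕ) (B : ℕ) : List ι → ℕ
  | [] => 0
  | i :: w => (f i + 1) * B ^ w.length + lexWeight f B w

namespace List

variable {f : ι → ℕ} {B : ℕ}

theorem lexWeight_append (p s : List ι) :
    lexWeight f B (p ++ s) = lexWeight f B p * B ^ s.length + lexWeight f B s := by
  induction p with
  | nil => simp [lexWeight]
  | cons i p ih =>
    simp only [cons_append, lexWeight, length_append, ih, pow_add]
    ring

theorem lexWeight_lt_pow (hB : ∀ i, f i + 2 ≤ B) (w : List ι) :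
    lexWeight f B w < B ^ w.length := by
  induction w with
  | nil => simp [lexWeight]
  | cons i w ih =>
    calc lexWeight f B (i :: w) < (f i + 1) * B ^ w.length + B ^ w.length := by
          simpa [lexWeight] using ih
      _ = (f i + 2) * B ^ w.length := by ring
      _ ≤ B ^ (i :: w).length := by
          rw [length_cons, pow_succ']
          exact Nat.mul_le_mul_right _ (hB i)

theorem lexWeight_cons_lt_cons (hB : ∀ i, f i + 2 ≤ B) {u x : ι} (h : f u < f x)
    {s s' : List ι} (hl : s.length ≤ s'.length) :
    lexWeight f B (u :: s) < lexWeight f B (x :: s') :=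
  calc lexWeight f B (u :: s) < (f u + 1) * B ^ s.length + B ^ s.length := by
        simpa [lexWeight] using lexWeight_lt_pow hB s
    _ = (f u + 2) * B ^ s.length := by ring
    _ ≤ (f x + 1) * B ^ s'.length :=
        Nat.mul_le_mul (by omega) (Nat.pow_le_pow_right (by have := hB u; omega) hl)
    _ ≤ lexWeight f B (x :: s') := Nat.le_add_right _ _

theorem lexWeight_append_cons_lt (hB : ∀ i, f i + 2 ≤ B) (p : List ι) {u x : ι}
    (h : f u < f x) {s s' : List ι} (hl : s.length ≤ s'.length) :
    lexWeight f B (p ++ u :: s) < lexWeight f B (p ++ x :: s') := by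
  rw [lexWeight_append, lexWeight_append]
  refine Nat.add_lt_add_of_le_of_lt (Nat.mul_le_mul_left _ ?_) (lexWeight_cons_lt_cons hB h hl)
  exact Nat.pow_le_pow_right (by have := hB u; omega) (by simpa using hl)

end List

theorem exists_strictMono_lt_card (ι : Type*) [Preorder ι] [Finite ι] :
    ∃ f : ι → ℕ, StrictMono f ∧ ∀ i, f i < Nat.card ι :=
  ⟨fun i => {j | j < i}.ncard,
    fun _ _ hij =>
      Set.ncard_lt_ncard ⟨fun _ hj => lt_trans hj hij, fun h => lt_irrefl _ (h hij)⟩,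
    fun i => Set.ncard_lt_card ((Set.ne_univ_iff_exists_notMem _).2 ⟨i, lt_irrefl i⟩)⟩

end Weight

theorem TwoSidedIdeal.span_empty {R : Type*} [NonUnitalNonAssocRing R] :
    span (∅ : Set R) = ⊥ :=
  le_bot_iff.1 (span_le.2 (Set.empty_subset _))

theorem Module.Basis.injective_of_linearIndependent_comp {R M N ι : Type*} [CommRing R]
    [AddCommGroup M] [Module R M] [AddCommGroup N] [Module R N] (b : Module.Basis ι R M)
    {f : M →ₗ[R] N} (hf : LinearIndependent R (f ∘ b)) : Function.Injective f := by
  have := b.injective_constr_of_linearIndependent (R₂ := R) hf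
  rwa [Function.comp_def, b.constr_self] at this

theorem List.exists_prod_mul_eq_units_smul_mul_prod {R A : Type*} [CommSemiring R] [Semiring A]
    [Algebra R A] {x : A} (l : List A) (h : ∀ y ∈ l, ∃ c : Rˣ, y * x = c • (x * y)) :
    ∃ c : Rˣ, l.prod * x = c • (x * l.prod) := by
  induction l with
  | nil => exact ⟨1, by simp⟩
  | cons y l ih =>
    obtain ⟨c, hc⟩ := h y mem_cons_self
    obtain ⟨d, hd⟩ := ih fun z hz => h z (mem_cons_of_mem y hz)
    refine ⟨c * d, ?_⟩
    rw [prod_cons, mul_assoc, hd, mul_smul_comm, ← mul_assoc, hc, smul_mul_assoc, smul_smul,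
      mul_comm d, mul_assoc]

theorem le_of_forall_minimal_eq {ι : Type*} [PartialOrder ι] [WellFoundedLT ι] {a : ι}
    (h : ∀ b, (∀ c, ¬ c < b) → b = a) (i : ι) : a ≤ i := by
  obtain ⟨m, hmi, hm⟩ := exists_minimal_le_of_wellFoundedLT (fun _ => True) i trivial
  exact h m (fun c => hm.not_lt trivial) ▸ hmi

namespace QuantumGradedASL

variable {k : Type*} [Field k] {A : Type*} [Ring A] [Algebra k A]
  {𝒜 : ℕ → Submodule k A} {ι : Type*} [PartialOrder ι] [Finite ι]
  (Q : QuantumGradedASL k A 𝒜 ι)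

def stdMonomial (l : {l : List ι // l.IsChain (· ≤ ·)}) : A := ((l : List ι).map Q.elem).prod

/-- The right-hand-side terms allowed in the straightening relations (4) and (5) for `a`, `b`. -/
def lowerTerms (a b : ι) : Set A :=
  {x : A | ∃ lam : ι, lam < a ∧ lam < b ∧
    (x = Q.elem lam ∨ ∃ mu : ι, lam ≤ mu ∧ x = Q.elem lam * Q.elem mu)}

theorem prod_map_elem_mem_span_stdMonomial (w : List ι) :
    (w.map Q.elem).prod ∈ span k (Set.range Q.stdMonomial) := by
  obtain ⟨f, hf, hfcard⟩ := exists_strictMono_lt_card ι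
  have hB : ∀ i, f i + 2 ≤ Nat.card ι + 2 := fun i => by have := hfcard i; omega
  induction w using (measure (List.lexWeight f (Nat.card ι + 2))).wf.induction with
  | _ w IH =>
    by_cases hchain : w.IsChain (· ≤ ·)
    · exact subset_span ⟨⟨w, hchain⟩, rfl⟩
    obtain ⟨x, y, p, t, rfl, hxy⟩ : ∃ x y p t, w = p ++ x :: y :: t ∧ ¬ x ≤ y := by
      simpa [List.isChain_iff_forall_rel_of_append_cons_cons] using hchain
    set P := (p.map Q.elem).prod
    set T := (t.map Q.elem).prod
    have hlower : span k (Q.lowerTerms x y) ≤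
        (span k (Set.range Q.stdMonomial)).comap (LinearMap.mulLeftRight k (P, T)) := by
      rw [span_le]
      rintro _ ⟨lam, hlx, -, rfl | ⟨mu, -, rfl⟩⟩
      · simpa [P, T, List.prod_append, mul_assoc] using
          IH (p ++ lam :: t) (List.lexWeight_append_cons_lt hB p (hf hlx) (by simp))
      · simpa [P, T, List.prod_append, mul_assoc] using
          IH (p ++ lam :: mu :: t) (List.lexWeight_append_cons_lt hB p (hf hlx) (by simp))
    have hword : ∀ u v, ((p ++ u :: v :: t).map Q.elem).prod =
        LinearMap.mulLeftRight k (P, T) (Q.elem u * Q.elem v) := by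
      intro u v
      simp [P, T, List.prod_append, mul_assoc]
    by_cases hyx : y ≤ x
    · have hyx : y < x := lt_of_le_of_ne hyx fun h => hxy (h ▸ le_rfl)
      obtain ⟨c, -, hc⟩ := Q.comm x y
      rw [hword, ← sub_add_cancel (Q.elem x * Q.elem y) (c • (Q.elem y * Q.elem x)), map_add,
        map_smul, ← hword]
      exact add_mem (hlower hc)
        (smul_mem _ c (IH _ (List.lexWeight_append_cons_lt hB p (hf hyx) le_rfl)))
    · rw [hword]
      exact hlower (Q.straighten x y hxy hyx)

theorem span_stdMonomial_eq_top : span k (Set.range Q.stdMonomial) = ⊤ := by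
  refine eq_top_iff.2 fun y _ => ?_
  have hy : y ∈ Subalgebra.toSubmodule (Algebra.adjoin k (Set.range Q.elem)) := by
    simp [Q.gen]
  rw [Algebra.adjoin_eq_span, ← FreeMonoid.mrange_lift] at hy
  refine span_le.2 ?_ hy
  rintro _ ⟨w, rfl⟩
  simpa [FreeMonoid.lift_apply] using Q.prod_map_elem_mem_span_stdMonomial w.toList

noncomputable def stdBasis : Module.Basis {l : List ι // l.IsChain (· ≤ ·)} k A :=
  .mk (v := Q.stdMonomial) Q.indep Q.span_stdMonomial_eq_top.ge

theorem coe_stdBasis : ⇑Q.stdBasis = Q.stdMonomial :=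
  Module.Basis.coe_mk _ _

theorem mem_twoSidedIdeal_of_mem_span_lowerTerms {a b : ι} {z : A}
    (hz : z ∈ span k (Q.lowerTerms a b)) : z ∈ TwoSidedIdeal.span (Q.elem '' {c | c < a}) := by
  set I := TwoSidedIdeal.span (Q.elem '' {c | c < a})
  refine (span_le (p := I.asIdeal.restrictScalars k)).2 ?_ hz
  have hmem : ∀ lam, lam < a → Q.elem lam ∈ I := fun lam h =>
    TwoSidedIdeal.subset_span ⟨lam, h, rfl⟩
  rintro _ ⟨lam, hla, -, rfl | ⟨mu, -, rfl⟩⟩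
  · exact TwoSidedIdeal.mem_asIdeal.2 (hmem lam hla)
  · exact TwoSidedIdeal.mem_asIdeal.2 (I.mul_mem_right _ _ (hmem lam hla))

theorem isNormalModSet_elem (a : ι) :
    IsNormalModSet (Q.elem a) (TwoSidedIdeal.span (Q.elem '' {c | c < a}) : Set A) := by
  refine isNormalModSet_of_adjoin_eq_top Q.gen _ ?_
  rintro _ ⟨i, rfl⟩
  obtain ⟨c, hc0, hc⟩ := Q.comm a i
  exact ⟨Units.mk0 c hc0, Q.mem_twoSidedIdeal_of_mem_span_lowerTerms hc⟩

theorem exists_elem_mul_eq_units_smul_of_minimal {a : ι} (hmin : ∀ b, ¬ b < a) (i : ι) :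
    ∃ c : kˣ, Q.elem i * Q.elem a = c • (Q.elem a * Q.elem i) := by
  obtain ⟨c, hc0, hc⟩ := Q.comm i a
  have hempty : Q.lowerTerms i a = ∅ :=
    Set.eq_empty_of_forall_notMem fun _ ⟨lam, _, hla, _⟩ => hmin lam hla
  rw [← lowerTerms, hempty, span_empty, mem_bot, sub_eq_zero] at hc
  exact ⟨Units.mk0 c hc0, hc⟩

section Regular

variable {a : ι} (hbot : ∀ i, a ≤ i)
include hbot

theorem linearIndependent_elem_mul_stdMonomial :
    LinearIndependent k fun l => Q.elem a * Q.stdMonomial l := by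
  let cons (l : {l : List ι // l.IsChain (· ≤ ·)}) : {l : List ι // l.IsChain (· ≤ ·)} :=
    ⟨a :: l.1, List.isChain_cons.2 ⟨fun b _ => hbot b, l.2⟩⟩
  have hcons : Function.Injective cons := fun _ _ h =>
    Subtype.ext (List.cons_injective (congrArg Subtype.val h))
  convert Q.indep.comp cons hcons using 1
  funext l
  rfl

theorem elem_mul_injective : Function.Injective (Q.elem a * ·) :=
  Q.stdBasis.injective_of_linearIndependent_comp (f := LinearMap.mulLeft k (Q.elem a))
    (by simpa [coe_stdBasis, Function.comp_def] using
      Q.linearIndependent_elem_mul_stdMonomial hbot)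

theorem mul_elem_injective
    (hcomm : ∀ i, ∃ c : kˣ, Q.elem i * Q.elem a = c • (Q.elem a * Q.elem i)) :
    Function.Injective (· * Q.elem a) := by
  choose u hu using fun l : {l : List ι // l.IsChain (· ≤ ·)} =>
    List.exists_prod_mul_eq_units_smul_mul_prod (l.1.map Q.elem)
      (by simpa using fun i _ => hcomm i)
  have hfun : LinearMap.mulRight k (Q.elem a) ∘ Q.stdBasis =
      u • fun l => Q.elem a * Q.stdMonomial l := by
    ext l
    simpa [coe_stdBasis, stdMonomial, Units.smul_def] using hu l
  refine Q.stdBasis.injective_of_linearIndependent_comp (f := LinearMap.mulRight k (Q.elem a)) ?_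
  rw [hfun]
  exact (Q.linearIndependent_elem_mul_stdMonomial hbot).units_smul u

end Regular

end QuantumGradedASL

/-- Let `A` be a quantum graded A.S.L. on the finite poset `(Π, ≤st)` and, for
`a ∈ Π`, let `I_a` be the two-sided ideal generated by `{c ∈ Π : c <st a}`.  Then every `a ∈ Π`
is normal modulo `I_a`; in particular every minimal element of `Π` is normal in `A`.  Moreover,
if `Π` has a unique minimal element `a`, then `a` is a regular normal element of `A`. -/
theorem qasl_normal_elements {k : Type*} [Field k] {A : Type*} [Ring A] [Algebra k A]
    {𝒜 : ℕ → Submodule k A} {ι : Type*} [PartialOrder ι] [Finite ι]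
    (Q : QuantumGradedASL k A 𝒜 ι) :
    (∀ a : ι,
      IsNormalModSet (Q.elem a) (TwoSidedIdeal.span (Q.elem '' {c : ι | c < a}) : Set A)) ∧
    (∀ a : ι, (∀ b : ι, ¬ b < a) → IsNormalModSet (Q.elem a) ({0} : Set A)) ∧
    (∀ a : ι, (∀ b : ι, ¬ b < a) → (∀ b : ι, (∀ c : ι, ¬ c < b) → b = a) →
      IsNormalModSet (Q.elem a) ({0} : Set A) ∧
      (∀ y : A, Q.elem a * y = 0 → y = 0) ∧ (∀ y : A, y * Q.elem a = 0 → y = 0)) := by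
  have hminimal (a : ι) (hmin : ∀ b, ¬ b < a) : IsNormalModSet (Q.elem a) ({0} : Set A) := by
    have hempty : {c | c < a} = ∅ := Set.eq_empty_of_forall_notMem hmin
    simpa [hempty, TwoSidedIdeal.span_empty, TwoSidedIdeal.coe_bot] using Q.isNormalModSet_elem a
  refine ⟨Q.isNormalModSet_elem, hminimal, fun a hmin huniq => ⟨hminimal a hmin, ?_, ?_⟩⟩
  · exact fun y hy => Q.elem_mul_injective (le_of_forall_minimal_eq huniq)
      (hy.trans (mul_zero _).symm)
  · exact fun y hy => Q.mul_elem_injective (le_of_forall_minimal_eq huniq)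
      (Q.exists_elem_mul_eq_units_smul_of_minimal hmin) (hy.trans (zero_mul _).symm)
end

section
/- Let k be a field, let A be a quantum graded algebra with a straightening law on a finite poset (Π, ≤st), let Ω be a Π-ideal, and let <tot be any total order on Π which respects ≤st (i.e. α <st β implies α <tot β). Then the elements of Ω, listed in increasing order with respect to <tot, form a normalising sequence of generators of the two-sided ideal ⟨Ω⟩ of A generated by Ω. -/
/-!
Modulo any two-sided ideal `I` containing the generators strictly below `α`, axiom (5) says
that `α` skew-commutes with every generator `β` up to a unit, since every straightening term
`λ` or `λμ` has `λ < α` and so lies in `I`. Skew-commuting with a generating set of the algebra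
makes `α` normal modulo `I`. For the `i`-th entry of the enumeration of `Ω`, the ideal spanned
by the earlier entries contains every generator below it, because `Ω` is a lower set and `<tot`
extends `<st`.
-/

theorem List.mem_take_of_pairwise {α : Type*} {r : α → α → Prop} [Std.Asymm r] {l : List α}
    (hl : l.Pairwise r) {i : ℕ} (hi : i < l.length) {a : α} (ha : a ∈ l) (har : r a l[i]) :
    a ∈ l.take i := by
  rw [← List.take_append_drop i l, List.drop_eq_getElem_cons hi, List.pairwise_append,
    List.pairwise_cons] at hl
  rw [← List.take_append_drop i l, List.drop_eq_getElem_cons hi, List.mem_append,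
    List.mem_cons] at ha
  rcases ha with ha | rfl | ha
  · exact ha
  · exact absurd har (Std.Asymm.asymm _ _ har)
  · exact absurd har (Std.Asymm.asymm _ _ (hl.2.1.1 a ha))

namespace TwoSidedIdeal

variable {k A : Type*} [CommRing k] [Ring A] [Algebra k A] (I : TwoSidedIdeal A)

theorem algebra_smul_mem (c : k) {y : A} (hy : y ∈ I) : c • y ∈ I := by
  rw [Algebra.smul_def]
  exact I.mul_mem_left _ _ hy

theorem submoduleSpan_subset {s : Set A} (hs : s ⊆ I) : (Submodule.span k s : Set A) ⊆ I :=
  Submodule.span_le (p := (asIdeal I).restrictScalars k) |>.2 hs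

def leftNormalizer (x : A) : Subalgebra k A where
  carrier := {a | ∃ b, x * a - b * x ∈ I}
  mul_mem' := by
    rintro a₁ a₂ ⟨b₁, hb₁⟩ ⟨b₂, hb₂⟩
    refine ⟨b₁ * b₂, ?_⟩
    have := I.add_mem (I.mul_mem_right _ a₂ hb₁) (I.mul_mem_left b₁ _ hb₂)
    rwa [show (x * a₁ - b₁ * x) * a₂ + b₁ * (x * a₂ - b₂ * x)
      = x * (a₁ * a₂) - b₁ * b₂ * x by noncomm_ring] at this
  add_mem' := by
    rintro a₁ a₂ ⟨b₁, hb₁⟩ ⟨b₂, hb₂⟩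
    refine ⟨b₁ + b₂, ?_⟩
    have := I.add_mem hb₁ hb₂
    rwa [show x * a₁ - b₁ * x + (x * a₂ - b₂ * x) = x * (a₁ + a₂) - (b₁ + b₂) * x by
      noncomm_ring] at this
  algebraMap_mem' c := ⟨algebraMap k A c, by rw [Algebra.commutes, sub_self]; exact I.zero_mem⟩

def rightNormalizer (x : A) : Subalgebra k A where
  carrier := {a | ∃ b, a * x - x * b ∈ I}
  mul_mem' := by
    rintro a₁ a₂ ⟨b₁, hb₁⟩ ⟨b₂, hb₂⟩
    refine ⟨b₁ * b₂, ?_⟩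
    have := I.add_mem (I.mul_mem_left a₁ _ hb₂) (I.mul_mem_right _ b₂ hb₁)
    rwa [show a₁ * (a₂ * x - x * b₂) + (a₁ * x - x * b₁) * b₂
      = a₁ * a₂ * x - x * (b₁ * b₂) by noncomm_ring] at this
  add_mem' := by
    rintro a₁ a₂ ⟨b₁, hb₁⟩ ⟨b₂, hb₂⟩
    refine ⟨b₁ + b₂, ?_⟩
    have := I.add_mem hb₁ hb₂
    rwa [show a₁ * x - x * b₁ + (a₂ * x - x * b₂) = (a₁ + a₂) * x - x * (b₁ + b₂) by
      noncomm_ring] at this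
  algebraMap_mem' c := ⟨algebraMap k A c, by rw [Algebra.commutes, sub_self]; exact I.zero_mem⟩

theorem isNormalModSet_of_adjoin_eq_top {S : Set A} (hS : Algebra.adjoin k S = ⊤) {x : A}
    (hx : ∀ s ∈ S, ∃ c : kˣ, x * s - (c : k) • (s * x) ∈ I) : IsNormalModSet x I := by
  have hleft : Algebra.adjoin k S ≤ I.leftNormalizer x := Algebra.adjoin_le fun s hs => by
    obtain ⟨c, hc⟩ := hx s hs
    exact ⟨(c : k) • s, by rwa [smul_mul_assoc]⟩
  have hright : Algebra.adjoin k S ≤ I.rightNormalizer x := Algebra.adjoin_le fun s hs => by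
    obtain ⟨c, hc⟩ := hx s hs
    refine ⟨(↑c⁻¹ : k) • s, ?_⟩
    have := I.algebra_smul_mem (-(↑c⁻¹ : k)) hc
    rw [smul_sub, smul_smul, neg_mul, Units.inv_mul, neg_smul, neg_smul, one_smul] at this
    rw [mul_smul_comm]
    convert this using 1
    abel
  rw [hS] at hleft hright
  exact ⟨fun a => hleft Algebra.mem_top, fun a => hright Algebra.mem_top⟩

end TwoSidedIdeal

namespace QuantumGradedASL

variable {k A ι : Type*} [Field k] [Ring A] [Algebra k A] {𝒜 : ℕ → Submodule k A}
  [PartialOrder ι] [Finite ι] (Q : QuantumGradedASL k A 𝒜 ι)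

theorem isNormalModSet_elem_s3 {I : TwoSidedIdeal A} {α : ι} (hI : ∀ lam < α, Q.elem lam ∈ I) :
    IsNormalModSet (Q.elem α) I := by
  refine I.isNormalModSet_of_adjoin_eq_top Q.gen ?_
  rintro _ ⟨β, rfl⟩
  obtain ⟨c, hc, hmem⟩ := Q.comm α β
  refine ⟨Units.mk0 c hc, I.submoduleSpan_subset ?_ hmem⟩
  rintro _ ⟨lam, hlam, -, rfl | ⟨mu, -, rfl⟩⟩
  · exact hI lam hlam
  · exact I.mul_mem_right _ _ (hI lam hlam)

end QuantumGradedASL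

theorem qasl_pi_ideal_normalising_sequence_general {k : Type*} [Field k] {A : Type*} [Ring A]
    [Algebra k A] {𝒜 : ℕ → Submodule k A} {ι : Type*} [PartialOrder ι] [Finite ι]
    (Q : QuantumGradedASL k A 𝒜 ι)
    (Ω : Set ι) (hΩ : IsLowerSet Ω)
    (r : ι → ι → Prop) (hr : IsStrictTotalOrder ι r) (hresp : ∀ a b : ι, a < b → r a b)
    (l : List ι) (henum : ∀ a : ι, a ∈ l ↔ a ∈ Ω)
    (hsorted : l.Chain' r) :
    TwoSidedIdeal.span (Q.elem '' Ω)
        = TwoSidedIdeal.span {x : A | ∃ a ∈ l, x = Q.elem a} ∧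
    ∀ (i : ℕ) (h : i < l.length),
      IsNormalModSet (Q.elem (l.get ⟨i, h⟩))
        (TwoSidedIdeal.span {x : A | ∃ a ∈ l.take i, x = Q.elem a} : Set A) := by
  have hpairwise : l.Pairwise r := hsorted.pairwise (R := r)
  refine ⟨?_, fun i hi => Q.isNormalModSet_elem_s3 fun lam hlam => ?_⟩
  · congr 1
    ext x
    simp only [Set.mem_image, Set.mem_ofPred_eq, henum, eq_comm]
  · have hα : l[i] ∈ Ω := (henum _).1 (List.getElem_mem hi)
    have hlam_mem : lam ∈ l := (henum lam).2 (hΩ hlam.le hα)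
    exact TwoSidedIdeal.subset_span
      ⟨lam, List.mem_take_of_pairwise hpairwise hi hlam_mem (hresp _ _ hlam), rfl⟩

/-- Let `A` be a quantum graded A.S.L. on the finite poset `(Π, ≤st)`, let `Ω`
be a `Π`-ideal (a lower set) and let `<tot` (here `r`) be any strict total order on `Π` which
respects `≤st`.  If `l` enumerates `Ω` in increasing `<tot`-order, then `l` is a normalising
sequence of generators of the two-sided ideal `⟨Ω⟩`: each entry is normal modulo the two-sided
ideal generated by the previous entries, and the entries generate `⟨Ω⟩`. -/
theorem qasl_pi_ideal_normalising_sequence {k : Type*} [Field k] {A : Type*} [Ring A]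
    [Algebra k A] {𝒜 : ℕ → Submodule k A} {ι : Type*} [PartialOrder ι] [Finite ι]
    (Q : QuantumGradedASL k A 𝒜 ι)
    (Ω : Set ι) (hΩ : IsLowerSet Ω)
    (r : ι → ι → Prop) (hr : IsStrictTotalOrder ι r) (hresp : ∀ a b : ι, a < b → r a b)
    (l : List ι) (hnodup : l.Nodup) (henum : ∀ a : ι, a ∈ l ↔ a ∈ Ω)
    (hsorted : l.Chain' r) :
    TwoSidedIdeal.span (Q.elem '' Ω)
        = TwoSidedIdeal.span {x : A | ∃ a ∈ l, x = Q.elem a} ∧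
    ∀ (i : ℕ) (h : i < l.length),
      IsNormalModSet (Q.elem (l.get ⟨i, h⟩))
        (TwoSidedIdeal.span {x : A | ∃ a ∈ l.take i, x = Q.elem a} : Set A) :=
  qasl_pi_ideal_normalising_sequence_general Q Ω hΩ r hr hresp l henum hsorted
end

section
/- Let m ≤ n be positive integers. The map δ_{m,n} : Δ_{m,n} → Π_{m,n+m}∖{{n+1,…,n+m}} sending (I,J) to K_{(I,J)}, the index set obtained by ordering {j₁,…,j_t, n+1,…,n+m}∖{n+m+1−i₁,…,n+m+1−i_t}, is a bijection, and for all (I,J),(K,L) ∈ Δ_{m,n}, one has (I,J) ≤st (K,L) if and only if δ_{m,n}((I,J)) ≤st δ_{m,n}((K,L)); i.e. δ_{m,n} is an isomorphism of posets from (Δ_{m,n}, ≤st) onto (Π_{m,n+m}∖{{n+1<⋯<n+m}}, ≤st). -/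
/-- An index pair `(I,J) ∈ Δ_{m,n}`: a pair of subsets `I ⊆ {1,…,m}`, `J ⊆ {1,…,n}` with
`|I| = |J| = t` for some `1 ≤ t ≤ m`, encoded by strictly increasing enumerations. -/
structure DeltaIdx (m n : ℕ) where
  /-- the common cardinality of the two index sets -/
  t : ℕ
  t_pos : 0 < t
  t_le : t ≤ m
  /-- the row index set `I = {i₁ < ⋯ < i_t}` -/
  I : Fin t ↪o Fin m
  /-- the column index set `J = {j₁ < ⋯ < j_t}` -/
  J : Fin t ↪o Fin n

namespace DeltaIdx

/-- The standard partial order on `Δ_{m,n}`:  `(I,J) ≤st (K,L)` iff `|I| ≥ |K| = v`,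
`i_s ≤ k_s` and `j_s ≤ l_s` for `1 ≤ s ≤ v`. -/
instance (m n : ℕ) : PartialOrder (DeltaIdx m n) where
  le P Q := ∃ h : Q.t ≤ P.t,
    (∀ s : Fin Q.t, P.I (Fin.castLE h s) ≤ Q.I s) ∧
    (∀ s : Fin Q.t, P.J (Fin.castLE h s) ≤ Q.J s)
  le_refl P := ⟨le_rfl, fun s => le_of_eq (congrArg P.I (Fin.ext rfl)),
    fun s => le_of_eq (congrArg P.J (Fin.ext rfl))⟩
  le_trans P Q R := by
    rintro ⟨h1, hI1, hJ1⟩ ⟨h2, hI2, hJ2⟩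
    refine ⟨h2.trans h1, fun s => ?_, fun s => ?_⟩
    · have e : Fin.castLE (h2.trans h1) s = Fin.castLE h1 (Fin.castLE h2 s) := Fin.ext rfl
      rw [e]
      exact (hI1 _).trans (hI2 s)
    · have e : Fin.castLE (h2.trans h1) s = Fin.castLE h1 (Fin.castLE h2 s) := Fin.ext rfl
      rw [e]
      exact (hJ1 _).trans (hJ2 s)
  le_antisymm P Q := by
    rintro ⟨h1, hI1, hJ1⟩ ⟨h2, hI2, hJ2⟩
    obtain ⟨t, ht0, htm, I, J⟩ := P
    obtain ⟨t', ht0', htm', I', J'⟩ := Q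
    dsimp only at h1 h2 hI1 hI2 hJ1 hJ2
    have ht : t = t' := le_antisymm h2 h1
    subst ht
    have eI : I = I' := by
      ext s
      have e : Fin.castLE h1 s = s := Fin.ext rfl
      have e2 : Fin.castLE h2 s = s := Fin.ext rfl
      exact congrArg Fin.val (le_antisymm (by simpa [e] using hI1 s) (by simpa [e2] using hI2 s))
    have eJ : J = J' := by
      ext s
      have e : Fin.castLE h1 s = s := Fin.ext rfl
      have e2 : Fin.castLE h2 s = s := Fin.ext rfl
      exact congrArg Fin.val (le_antisymm (by simpa [e] using hJ1 s) (by simpa [e2] using hJ2 s))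
    rw [eI, eJ]

/-- The padding map used to prove that `Δ_{m,n}` is finite. -/
def pad {m n : ℕ} (P : DeltaIdx m n) :
    (Fin m → WithTop (Fin m)) × (Fin m → WithTop (Fin n)) :=
  (fun s => if h : (s : ℕ) < P.t then (P.I ⟨s, h⟩ : WithTop (Fin m)) else ⊤,
   fun s => if h : (s : ℕ) < P.t then (P.J ⟨s, h⟩ : WithTop (Fin n)) else ⊤)

lemma pad_injective {m n : ℕ} : Function.Injective (pad (m := m) (n := n)) := by
  intro P Q hPQ
  have h1 := congrArg Prod.fst hPQ
  have h2 := congrArg Prod.snd hPQ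
  simp only [pad] at h1 h2
  have ht : P.t = Q.t := by
    by_contra hne
    rcases Nat.lt_or_ge P.t Q.t with h | h
    · have hfun := congrFun h1 ⟨P.t, lt_of_lt_of_le h Q.t_le⟩
      rw [dif_neg (by simp), dif_pos (by simpa using h)] at hfun
      exact (WithTop.coe_ne_top (hfun.symm)).elim
    · rcases Nat.lt_or_ge Q.t P.t with h' | h'
      · have hfun := congrFun h1 ⟨Q.t, lt_of_lt_of_le h' P.t_le⟩
        rw [dif_pos (by simpa using h'), dif_neg (by simp)] at hfun
        exact (WithTop.coe_ne_top hfun).elim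
      · exact hne (le_antisymm h' h)
  obtain ⟨t, ht0, htm, I, J⟩ := P
  obtain ⟨t', ht0', htm', I', J'⟩ := Q
  dsimp only at ht h1 h2
  subst ht
  have eI : I = I' := by
    ext s
    have hfun := congrFun h1 ⟨(s : ℕ), lt_of_lt_of_le s.isLt htm⟩
    rw [dif_pos (by simp), dif_pos (by simp)] at hfun
    have : I ⟨(s : ℕ), s.isLt⟩ = I' ⟨(s : ℕ), s.isLt⟩ := by
      exact_mod_cast hfun
    simpa using congrArg Fin.val this
  have eJ : J = J' := by
    ext s
    have hfun := congrFun h2 ⟨(s : ℕ), lt_of_lt_of_le s.isLt htm⟩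
    rw [dif_pos (by simp), dif_pos (by simp)] at hfun
    have : J ⟨(s : ℕ), s.isLt⟩ = J' ⟨(s : ℕ), s.isLt⟩ := by
      exact_mod_cast hfun
    simpa using congrArg Fin.val this
  rw [eI, eJ]

instance (m n : ℕ) : Finite (DeltaIdx m n) := by
  have : Finite (WithTop (Fin m)) := inferInstanceAs (Finite (Option (Fin m)))
  have : Finite (WithTop (Fin n)) := inferInstanceAs (Finite (Option (Fin n)))
  exact Finite.of_injective pad pad_injective

end DeltaIdx

/-- The index set `K_{(I,J)} ∈ Π_{m,n+m}` associated to an index pair `(I,J) ∈ Δ_{m,n}`: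
the `m`-element subset of `{1,…,n+m}` obtained by ordering
`{j₁,…,j_t, n+1,…,n+m} ∖ {n+m+1−i₁,…,n+m+1−i_t}` (here as a `Finset` of `Fin (n+m)`,
`0`-indexed). -/
def deltaImage {m n : ℕ} (P : DeltaIdx m n) : Finset (Fin (n + m)) :=
  ((Finset.univ.image fun s : Fin P.t => Fin.castLE (Nat.le_add_right n m) (P.J s)) ∪
      (Finset.univ.image fun i : Fin m => Fin.natAdd n i)) \
    (Finset.univ.image fun s : Fin P.t => Fin.natAdd n (Fin.rev (P.I s)))

/-!
Both orders are orders of counting functions. For strictly increasing enumerations `f`, `g`,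
`f s ≤ g s` for all `s` iff `#{s | g s < x} ≤ #{s | f s < x}` for all `x`; this compares the
sorted lists of two `m`-sets, and (with `≤ x` in place of `< x` for the row indices) the pairs
`(I, J)`. Below `n` the counting function of `K = δ(I, J)` is that of `J`; at `n + i` it is
`i + #{s | i_s ≤ m - 1 - i}`, because the upper block of `K` is the complement of the reversal
of `I`. So `(I, J) ≤ (K, L)` and `δ(I, J) ≤ δ(K, L)` unfold to the same inequalities.
Conversely `J` is read off from the part of an `m`-set below `n` and `I` from the reversed
complement of its upper part; `t > 0` exactly when the set is not `{n+1, …, n+m}`.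
-/

open Finset

theorem Fin.card_eq_card_castAdd_add_card_natAdd {m n : ℕ} (S : Finset (Fin (n + m))) :
    #S = #{j | Fin.castAdd m j ∈ S} + #{i | Fin.natAdd n i ∈ S} := by
  conv_lhs => rw [← filter_univ_mem S]
  simp only [card_filter, Fin.sum_univ_add]

theorem Fin.card_filter_rev {n : ℕ} (p : Fin n → Prop) [DecidablePred p] :
    #{i : Fin n | p i.rev} = #{i | p i} :=
  card_equiv Fin.revPerm (by simp)

theorem Finset.card_filter_mem_range_and {β γ : Type*} [Fintype β] [Fintype γ] [DecidableEq γ]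
    {f : β → γ} (hf : Function.Injective f) (p : γ → Prop) [DecidablePred p] :
    #{y | y ∈ Set.range f ∧ p y} = #{x | p (f x)} := by
  rw [← card_image_of_injective _ hf]
  congr 1
  ext y
  simp only [Set.mem_range, mem_filter, mem_univ, true_and, mem_image]
  constructor
  · rintro ⟨⟨x, rfl⟩, hy⟩
    exact ⟨x, hy, rfl⟩
  · rintro ⟨x, hx, rfl⟩
    exact ⟨⟨x, rfl⟩, hx⟩

theorem Finset.card_filter_mem_range {β γ : Type*} [Fintype β] [Fintype γ] [DecidableEq γ]
    {f : β → γ} (hf : Function.Injective f) : #{y | y ∈ Set.range f} = Fintype.card β := by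
  simpa using card_filter_mem_range_and hf (fun _ => True)

theorem Fin.castAdd_notMem_image_natAdd {m n : ℕ} {j : Fin n} :
    Fin.castAdd m j ∉ univ.image (Fin.natAdd n : Fin m → Fin (n + m)) := by
  simp only [mem_image, mem_univ, true_and, not_exists, Fin.ext_iff, Fin.val_natAdd,
    Fin.val_castAdd]
  omega

section CountingCriteria

variable {α : Type*} [LinearOrder α] {u v : ℕ} {f : Fin u → α} {g : Fin v → α}

theorem StrictMono.card_filter_lt_apply (hf : StrictMono f) (s : Fin u) :
    #{t | f t < f s} = s := by
  simp only [hf.lt_iff_lt, filter_gt_eq_Iio, Fin.card_Iio]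

theorem StrictMono.card_filter_le_apply (hf : StrictMono f) (s : Fin u) :
    #{t | f t ≤ f s} = s + 1 := by
  simp only [hf.le_iff_le, filter_ge_eq_Iic, Fin.card_Iic]

theorem forall_apply_castLE_le_iff_card_filter_lt (hf : StrictMono f) (hg : Monotone g)
    (h : v ≤ u) :
    (∀ s, f (Fin.castLE h s) ≤ g s) ↔ ∀ x, #{s | g s < x} ≤ #{s | f s < x} := by
  refine ⟨fun hfg x => ?_, fun hcard s => ?_⟩
  · refine card_le_card_of_injOn (Fin.castLE h) (fun s hs => ?_) (Fin.castLE_injective h).injOn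
    simp only [coe_filter, mem_univ, true_and] at hs ⊢
    exact (hfg s).trans_lt hs
  · by_contra! hlt
    have hbelow : Iic s ⊆ ({t | g t < f (Fin.castLE h s)} : Finset _) := fun t ht => by
      simpa using (hg (mem_Iic.1 ht)).trans_lt hlt
    have := (card_le_card hbelow).trans (hcard _)
    rw [Fin.card_Iic, hf.card_filter_lt_apply, Fin.val_castLE] at this
    omega

theorem forall_apply_castLE_le_iff_card_filter_le (hf : Monotone f) (hg : StrictMono g)
    (h : v ≤ u) :
    (∀ s, f (Fin.castLE h s) ≤ g s) ↔ ∀ x, #{s | g s ≤ x} ≤ #{s | f s ≤ x} := by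
  refine ⟨fun hfg x => ?_, fun hcard s => ?_⟩
  · refine card_le_card_of_injOn (Fin.castLE h) (fun s hs => ?_) (Fin.castLE_injective h).injOn
    simp only [coe_filter, mem_univ, true_and] at hs ⊢
    exact (hfg s).trans hs
  · by_contra! hlt
    have habove : ({t | f t ≤ g s} : Finset _) ⊆ Iio (Fin.castLE h s) := fun t ht =>
      mem_Iio.2 (hf.reflect_lt ((mem_filter.1 ht).2.trans_lt hlt))
    have := (hcard (g s)).trans (card_le_card habove)
    rw [Fin.card_Iio, hg.card_filter_le_apply, Fin.val_castLE] at this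
    omega

end CountingCriteria

theorem Finset.forall₂_sort_le_iff_card_filter_lt {α : Type*} [LinearOrder α] {S T : Finset α}
    (h : #S = #T) :
    List.Forall₂ (· ≤ ·) (S.sort (· ≤ ·)) (T.sort (· ≤ ·)) ↔
      ∀ x, #{z ∈ T | z < x} ≤ #{z ∈ S | z < x} := by
  have hcard (U : Finset α) (hU : #U = #S) (x : α) :
      #{z ∈ U | z < x} = #{s | U.orderEmbOfFin hU s < x} := by
    conv_lhs => rw [← map_orderEmbOfFin_univ U hU, filter_map, card_map]
    rfl
  have hsort : List.Forall₂ (· ≤ ·) (S.sort (· ≤ ·)) (T.sort (· ≤ ·)) ↔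
      ∀ s, S.orderEmbOfFin rfl s ≤ T.orderEmbOfFin h.symm s := by
    simp only [List.forall₂_iff_get, List.get_eq_getElem, orderEmbOfFin_apply, length_sort, h,
      true_and]
    exact ⟨fun H s => H s (by omega) (by omega), fun H i h₁ _ => H ⟨i, by omega⟩⟩
  simp only [hsort, hcard S rfl, hcard T h.symm]
  simpa using forall_apply_castLE_le_iff_card_filter_lt (S.orderEmbOfFin rfl).strictMono
    (T.orderEmbOfFin h.symm).monotone le_rfl

namespace DeltaIdx

variable {m n : ℕ} (P : DeltaIdx m n)

theorem castAdd_mem_deltaImage_iff {j : Fin n} :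
    Fin.castAdd m j ∈ deltaImage P ↔ j ∈ Set.range P.J := by
  simp only [deltaImage, mem_sdiff, mem_union, mem_image, mem_univ, true_and, Set.mem_range,
    Fin.ext_iff, Fin.val_castLE, Fin.val_castAdd, Fin.val_natAdd]
  have hj := j.isLt
  constructor
  · rintro ⟨⟨s, hs⟩ | ⟨i, hi⟩, -⟩
    · exact ⟨s, hs⟩
    · omega
  · rintro ⟨s, hs⟩
    exact ⟨Or.inl ⟨s, hs⟩, fun s' => by omega⟩

theorem natAdd_mem_deltaImage_iff {i : Fin m} :
    Fin.natAdd n i ∈ deltaImage P ↔ i.rev ∉ Set.range P.I := by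
  simp only [deltaImage, mem_sdiff, mem_union, mem_image, mem_univ, true_and, Set.mem_range,
    Fin.ext_iff, Fin.val_castLE, Fin.val_natAdd, Fin.val_rev, not_exists]
  have hi := i.isLt
  refine ⟨fun ⟨_, h⟩ s => ?_, fun h => ⟨Or.inr ⟨i, rfl⟩, fun s => ?_⟩⟩ <;>
  · have := h s
    have := (P.I s).isLt
    omega

theorem card_deltaImage_filter_lt_castAdd (j : Fin n) :
    #{z ∈ deltaImage P | z < Fin.castAdd m j} = #{s | P.J s < j} := by
  have hhigh (i : Fin m) : ¬Fin.natAdd n i < Fin.castAdd m j := by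
    simp only [Fin.lt_def, Fin.val_natAdd, Fin.val_castAdd]
    omega
  have hlow (j' : Fin n) : Fin.castAdd m j' < Fin.castAdd m j ↔ j' < j := Iff.rfl
  rw [Fin.card_eq_card_castAdd_add_card_natAdd]
  simp only [mem_filter, castAdd_mem_deltaImage_iff, hlow, hhigh, and_false, filter_false,
    card_empty, add_zero]
  exact card_filter_mem_range_and P.J.injective (· < j)

theorem card_deltaImage_filter_lt_natAdd (i : Fin m) :
    #{z ∈ deltaImage P | z < Fin.natAdd n i} = i + #{s | P.I s ≤ i.rev} := by
  have hlow (j : Fin n) : Fin.castAdd m j < Fin.natAdd n i := by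
    simp only [Fin.lt_def, Fin.val_natAdd, Fin.val_castAdd]
    omega
  rw [Fin.card_eq_card_castAdd_add_card_natAdd]
  simp only [mem_filter, castAdd_mem_deltaImage_iff, natAdd_mem_deltaImage_iff, hlow, and_true,
    Fin.natAdd_lt_natAdd_iff]
  have hJ := card_filter_mem_range P.J.injective
  rw [Fintype.card_fin] at hJ
  have hrev :
      #{i' | i'.rev ∉ Set.range P.I ∧ i' < i} = #{k | i.rev < k ∧ k ∉ Set.range P.I} := by
    rw [← Fin.card_filter_rev]
    simp only [Fin.rev_rev, Fin.rev_lt_iff, and_comm]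
  have hIoi := card_filter_add_card_filter_not (s := {k | i.rev < k}) (· ∈ Set.range P.I)
  rw [filter_filter, filter_filter, filter_lt_eq_Ioi, Fin.card_Ioi, Fin.val_rev] at hIoi
  have hI : #{k | i.rev < k ∧ k ∈ Set.range P.I} = #{s | i.rev < P.I s} := by
    simpa only [and_comm] using card_filter_mem_range_and P.I.injective (i.rev < ·)
  have hIsplit := card_filter_add_card_filter_not (s := univ) (fun s => i.rev < P.I s)
  simp only [not_lt, card_univ, Fintype.card_fin] at hIsplit
  omega

theorem card_deltaImage : #(deltaImage P) = m := by
  have hJ := card_filter_mem_range P.J.injective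
  rw [Fintype.card_fin] at hJ
  have hI := card_filter_mem_range P.I.injective
  rw [Fintype.card_fin] at hI
  have hIc := card_filter_add_card_filter_not (s := univ) (· ∈ Set.range P.I)
  rw [card_univ, Fintype.card_fin] at hIc
  rw [Fin.card_eq_card_castAdd_add_card_natAdd]
  simp only [castAdd_mem_deltaImage_iff, natAdd_mem_deltaImage_iff,
    Fin.card_filter_rev (· ∉ Set.range P.I)]
  have := P.t_le
  omega

theorem deltaImage_ne_image_natAdd : deltaImage P ≠ univ.image (Fin.natAdd n) := by
  intro h
  have hmem : Fin.castAdd m (P.J ⟨0, P.t_pos⟩) ∈ deltaImage P :=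
    P.castAdd_mem_deltaImage_iff.2 ⟨_, rfl⟩
  rw [h] at hmem
  exact Fin.castAdd_notMem_image_natAdd hmem

theorem le_iff_card_filter_le (P Q : DeltaIdx m n) :
    P ≤ Q ↔ (∀ j, #{s | Q.J s < j} ≤ #{s | P.J s < j}) ∧
      ∀ k, #{s | Q.I s ≤ k} ≤ #{s | P.I s ≤ k} := by
  constructor
  · rintro ⟨h, hI, hJ⟩
    exact ⟨(forall_apply_castLE_le_iff_card_filter_lt P.J.strictMono Q.J.monotone h).1 hJ,
      (forall_apply_castLE_le_iff_card_filter_le P.I.monotone Q.I.strictMono h).1 hI⟩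
  · rintro ⟨hJ, hI⟩
    obtain ⟨m, rfl⟩ : ∃ m', m = m' + 1 := Nat.exists_eq_add_one.2 (P.t_pos.trans_le P.t_le)
    have h : Q.t ≤ P.t := by simpa [Fin.le_last] using hI (Fin.last m)
    exact ⟨h, (forall_apply_castLE_le_iff_card_filter_le P.I.monotone Q.I.strictMono h).2 hI,
      (forall_apply_castLE_le_iff_card_filter_lt P.J.strictMono Q.J.monotone h).2 hJ⟩

theorem le_iff_forall₂_sort_deltaImage (P Q : DeltaIdx m n) :
    P ≤ Q ↔ List.Forall₂ (· ≤ ·)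
      ((deltaImage P).sort (· ≤ ·)) ((deltaImage Q).sort (· ≤ ·)) := by
  rw [forall₂_sort_le_iff_card_filter_lt (P.card_deltaImage.trans Q.card_deltaImage.symm),
    Fin.forall_fin_add, le_iff_card_filter_le]
  simp only [card_deltaImage_filter_lt_castAdd, card_deltaImage_filter_lt_natAdd,
    add_le_add_iff_left]
  exact and_congr_right' ⟨fun h i => h _, fun h k => by simpa using h k.rev⟩

theorem deltaImage_injective : Function.Injective (deltaImage (m := m) (n := n)) := by
  have hle (P Q : DeltaIdx m n) (h : deltaImage P = deltaImage Q) : P ≤ Q :=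
    (le_iff_forall₂_sort_deltaImage P Q).2 (h ▸ List.forall₂_same.2 fun _ _ => le_rfl)
  exact fun P Q h => le_antisymm (hle P Q h) (hle Q P h.symm)

theorem exists_deltaImage_eq {S : Finset (Fin (n + m))} (hS : #S = m)
    (hne : S ≠ univ.image (Fin.natAdd n)) : ∃ P : DeltaIdx m n, deltaImage P = S := by
  have hsplit := Fin.card_eq_card_castAdd_add_card_natAdd S
  have hcompl :=
    card_filter_add_card_filter_not (s := univ) (fun k : Fin m => Fin.natAdd n k.rev ∈ S)
  rw [Fin.card_filter_rev (fun i => Fin.natAdd n i ∈ S), card_univ, Fintype.card_fin] at hcompl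
  set L : Finset (Fin n) := {j | Fin.castAdd m j ∈ S}
  set R : Finset (Fin m) := {k | Fin.natAdd n k.rev ∉ S}
  have hR : #R = #L := by omega
  have hL : 0 < #L := by
    by_contra! h0
    apply hne
    have hL0 := filter_eq_empty_iff.1 (card_eq_zero.1 (show #L = 0 by omega))
    have hR0 := filter_eq_empty_iff.1 (card_eq_zero.1 (show #R = 0 by omega))
    ext x
    induction x using Fin.addCases with
    | left j => exact iff_of_false (hL0 (mem_univ j)) Fin.castAdd_notMem_image_natAdd
    | right i =>
      refine iff_of_true ?_ (mem_image_of_mem _ (mem_univ i))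
      simpa using hR0 (mem_univ i.rev)
  refine ⟨⟨#L, hL, by omega, R.orderEmbOfFin hR, L.orderEmbOfFin rfl⟩, ?_⟩
  ext x
  induction x using Fin.addCases with
  | left j => simp [castAdd_mem_deltaImage_iff, L]
  | right i => simp [natAdd_mem_deltaImage_iff, R]

end DeltaIdx

theorem deltaImage_poset_isomorphism_general (m n : ℕ) :
    (∀ P : DeltaIdx m n,
        (deltaImage P).card = m ∧
        deltaImage P ≠ Finset.univ.image (fun i : Fin m => Fin.natAdd n i)) ∧
    Function.Injective (deltaImage (m := m) (n := n)) ∧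
    (∀ S : Finset (Fin (n + m)), S.card = m →
        S ≠ Finset.univ.image (fun i : Fin m => Fin.natAdd n i) →
        ∃ P : DeltaIdx m n, deltaImage P = S) ∧
    (∀ P Q : DeltaIdx m n, P ≤ Q ↔
        List.Forall₂ (· ≤ ·)
          ((deltaImage P).sort (· ≤ ·)) ((deltaImage Q).sort (· ≤ ·))) :=
  ⟨fun P => ⟨P.card_deltaImage, P.deltaImage_ne_image_natAdd⟩, DeltaIdx.deltaImage_injective,
    fun _ => DeltaIdx.exists_deltaImage_eq, DeltaIdx.le_iff_forall₂_sort_deltaImage⟩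

/-- The map `δ_{m,n} : Δ_{m,n} → Π_{m,n+m} ∖ {{n+1,…,n+m}}`,
`(I,J) ↦ K_{(I,J)}`, is well defined (each `K_{(I,J)}` is an `m`-element subset different from
`{n+1,…,n+m}`), it is bijective onto `Π_{m,n+m} ∖ {{n+1,…,n+m}}`, and it is an isomorphism of
posets: `(I,J) ≤st (K,L)` iff `δ_{m,n}(I,J) ≤st δ_{m,n}(K,L)`, where the standard order on
`m`-element subsets is comparison of the increasing enumerations. -/
theorem deltaImage_poset_isomorphism (m n : ℕ) (hm : 0 < m) (hmn : m ≤ n) :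
    (∀ P : DeltaIdx m n,
        (deltaImage P).card = m ∧
        deltaImage P ≠ Finset.univ.image (fun i : Fin m => Fin.natAdd n i)) ∧
    Function.Injective (deltaImage (m := m) (n := n)) ∧
    (∀ S : Finset (Fin (n + m)), S.card = m →
        S ≠ Finset.univ.image (fun i : Fin m => Fin.natAdd n i) →
        ∃ P : DeltaIdx m n, deltaImage P = S) ∧
    (∀ P Q : DeltaIdx m n, P ≤ Q ↔
        List.Forall₂ (· ≤ ·)
          ((deltaImage P).sort (· ≤ ·)) ((deltaImage Q).sort (· ≤ ·))) :=
  deltaImage_poset_isomorphism_general m n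
end
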